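/- arXiv:1805.05502 — 6 statements merged into one kernel-verified Lean document; each statement's English description precedes it below -/
import Mathlib

section
/- Let A, B ∈ ℝ^{D×D} be symmetric matrices with A positive semidefinite and B positive definite, let B^{1/2} denote the positive definite symmetric square root of B, let μ_1 ≥ μ_2 ≥ … ≥ μ_D be the eigenvalues of the symmetric matrix B^{-1/2} A B^{-1/2}, and let 1 ≤ d ≤ D. Then for every matrix U ∈ ℝ^{D×d} such that UᵀBU is invertible, Tr[(UᵀBU)^{-1}(UᵀAU)] ≤ μ_1 + μ_2 + … + μ_d. -/
open Matrix

lemma sum_mu_c_le {D d : ℕ} (hd1 : 1 ≤ d) (hd : d ≤ D) (μ c : Fin D → ℝ)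
    (hμ : Antitone μ) (hc0 : ∀ i, 0 ≤ c i) (hc1 : ∀ i, c i ≤ 1)
    (hsum : ∑ i, c i = (d : ℝ)) :
    ∑ i, μ i * c i ≤ ∑ i : Fin d, μ (Fin.castLE hd i) := by
  have hdD : d - 1 < D := lt_of_lt_of_le (Nat.sub_lt hd1 one_pos) hd
  set t := μ ⟨d - 1, hdD⟩ with ht
  have key : ∀ i : Fin D, μ i * c i ≤ t * c i + (if (i : ℕ) < d then μ i - t else 0) := by
    intro i
    by_cases h : (i : ℕ) < d
    · have hit : t ≤ μ i := by
        apply hμ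
        exact Fin.le_def.mpr (Nat.le_sub_one_of_lt h)
      have := hc1 i
      simp only [h, if_true]
      nlinarith [hc0 i]
    · have hit : μ i ≤ t := by
        apply hμ
        exact Fin.le_def.mpr (le_trans (Nat.sub_le d 1) (le_of_not_gt h))
      simp only [h, if_false, add_zero]
      exact mul_le_mul_of_nonneg_right hit (hc0 i)
  have hsetEq : (Finset.univ.map (Fin.castLEEmb hd))
      = Finset.univ.filter (fun i : Fin D => (i : ℕ) < d) := by
    ext j
    simp only [Finset.mem_map, Finset.mem_univ, true_and, Finset.mem_filter,
      Fin.castLEEmb, Function.Embedding.coeFn_mk]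
    constructor
    · rintro ⟨a, rfl⟩
      exact a.isLt
    · intro hj
      exact ⟨⟨(j : ℕ), hj⟩, rfl⟩
  have hsum2 : ∑ i : Fin D, (if (i : ℕ) < d then μ i - t else 0)
      = ∑ i : Fin d, (μ (Fin.castLE hd i) - t) := by
    rw [← Finset.sum_filter, ← hsetEq, Finset.sum_map]
    rfl
  calc ∑ i, μ i * c i ≤ ∑ i : Fin D, (t * c i + (if (i : ℕ) < d then μ i - t else 0)) :=
        Finset.sum_le_sum (fun i _ => key i)
    _ = t * (d : ℝ) + (∑ i : Fin d, μ (Fin.castLE hd i) - (d : ℝ) * t) := by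
        rw [Finset.sum_add_distrib, ← Finset.mul_sum, hsum, hsum2, Finset.sum_sub_distrib]
        simp [mul_comm]
    _ = ∑ i : Fin d, μ (Fin.castLE hd i) := by ring

private lemma symm_conj {m n : ℕ} (V : Matrix (Fin m) (Fin n) ℝ)
    (G : Matrix (Fin n) (Fin n) ℝ) (hG : Gᵀ = G) : (V * G * Vᵀ)ᵀ = V * G * Vᵀ := by
  rw [Matrix.transpose_mul, Matrix.transpose_mul, Matrix.transpose_transpose, hG,
    Matrix.mul_assoc]

/-- Upper-bound half of Theorem 1 of the paper: for symmetric `A ⪰ 0`, `B ≻ 0`,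
with `S = B^{1/2}` the positive definite symmetric square root of `B`, and
`μ : Fin D → ℝ` the eigenvalues of `B^{-1/2} A B^{-1/2}` sorted in decreasing order
(encoded by an orthogonal diagonalization with `Antitone μ`), every `U ∈ ℝ^{D×d}`
with `UᵀBU` invertible satisfies
`Tr[(UᵀBU)⁻¹ (UᵀAU)] ≤ μ₁ + ⋯ + μ_d`. -/
theorem dPCA_ratio_trace_upper_bound {D d : ℕ} (hd1 : 1 ≤ d) (hd : d ≤ D)
    (A B : Matrix (Fin D) (Fin D) ℝ)
    (hA : A.PosSemidef) (hB : B.PosDef)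
    (S : Matrix (Fin D) (Fin D) ℝ) (hS : S.PosDef) (hSB : S * S = B)
    (μ : Fin D → ℝ) (hμ : Antitone μ)
    (Q : Matrix (Fin D) (Fin D) ℝ) (hQ : Qᵀ * Q = 1)
    (hdiag : S⁻¹ * A * S⁻¹ = Q * Matrix.diagonal μ * Qᵀ) :
    ∀ U : Matrix (Fin D) (Fin d) ℝ, IsUnit (Uᵀ * B * U) →
      ((Uᵀ * B * U)⁻¹ * (Uᵀ * A * U)).trace ≤ ∑ i : Fin d, μ (Fin.castLE hd i) := by
  intro U hU
  classical
  -- basic facts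
  have hSsym : Sᵀ = S := hS.isHermitian
  have hSdet : IsUnit S.det := isUnit_iff_ne_zero.mpr (ne_of_gt hS.det_pos)
  have hSinv1 : S * S⁻¹ = 1 := Matrix.mul_nonsing_inv S hSdet
  have hSinv2 : S⁻¹ * S = 1 := Matrix.nonsing_inv_mul S hSdet
  obtain ⟨V, hV⟩ : ∃ V : Matrix (Fin D) (Fin d) ℝ, V = S * U := ⟨_, rfl⟩
  have hVV : Vᵀ * V = Uᵀ * B * U := by
    rw [hV, Matrix.transpose_mul, hSsym, ← hSB]
    simp only [Matrix.mul_assoc]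
  obtain ⟨M, hM⟩ : ∃ M : Matrix (Fin D) (Fin D) ℝ, M = S⁻¹ * A * S⁻¹ := ⟨_, rfl⟩
  have hUAU : Vᵀ * M * V = Uᵀ * A * U := by
    rw [hV, hM, Matrix.transpose_mul, hSsym]
    calc Uᵀ * S * (S⁻¹ * A * S⁻¹) * (S * U)
        = Uᵀ * (S * S⁻¹) * A * ((S⁻¹ * S) * U) := by
          simp only [Matrix.mul_assoc]
      _ = Uᵀ * A * U := by
          rw [hSinv1, hSinv2, Matrix.one_mul, Matrix.mul_one]
  have hGdet : IsUnit (Vᵀ * V).det := by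
    rw [hVV]; exact (Matrix.isUnit_iff_isUnit_det _).mp hU
  obtain ⟨G, hG⟩ : ∃ G : Matrix (Fin d) (Fin d) ℝ, G = (Vᵀ * V)⁻¹ := ⟨_, rfl⟩
  have hG1 : (Vᵀ * V) * G = 1 := by rw [hG]; exact Matrix.mul_nonsing_inv _ hGdet
  have hG2 : G * (Vᵀ * V) = 1 := by rw [hG]; exact Matrix.nonsing_inv_mul _ hGdet
  have hGsym : Gᵀ = G := by
    rw [hG, Matrix.transpose_nonsing_inv, Matrix.transpose_mul, Matrix.transpose_transpose]
  obtain ⟨P, hP⟩ : ∃ P : Matrix (Fin D) (Fin D) ℝ, P = V * G * Vᵀ := ⟨_, rfl⟩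
  have hPsym : Pᵀ = P := by rw [hP]; exact symm_conj V G hGsym
  have hPP : P * P = P := by
    rw [hP]
    calc V * G * Vᵀ * (V * G * Vᵀ) = V * (G * (Vᵀ * V)) * (G * Vᵀ) := by
          simp only [Matrix.mul_assoc]
      _ = V * G * Vᵀ := by rw [hG2, Matrix.mul_one, Matrix.mul_assoc]
  have hQQ : Q * Qᵀ = 1 := mul_eq_one_comm.mp hQ
  obtain ⟨N, hN⟩ : ∃ N : Matrix (Fin D) (Fin D) ℝ, N = Qᵀ * P * Q := ⟨_, rfl⟩
  have hNsym : Nᵀ = N := by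
    rw [hN]
    have := symm_conj Qᵀ P hPsym
    rw [Matrix.transpose_transpose] at this
    exact this
  have hNN : N * N = N := by
    rw [hN]
    calc Qᵀ * P * Q * (Qᵀ * P * Q) = Qᵀ * P * (Q * Qᵀ) * (P * Q) := by
          simp only [Matrix.mul_assoc]
      _ = Qᵀ * P * Q := by
          rw [hQQ, Matrix.mul_one,
            show Qᵀ * P * (P * Q) = Qᵀ * (P * P) * Q by simp only [Matrix.mul_assoc], hPP,
            Matrix.mul_assoc]
  -- trace rewriting
  have htr : ((Uᵀ * B * U)⁻¹ * (Uᵀ * A * U)).trace = (Matrix.diagonal μ * N).trace := by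
    rw [← hVV, ← hUAU, ← hG]
    calc (G * (Vᵀ * M * V)).trace = (M * P).trace := by
          rw [Matrix.trace_mul_comm G (Vᵀ * M * V), hP]
          rw [show Vᵀ * M * V * G = Vᵀ * (M * (V * G)) by simp only [Matrix.mul_assoc]]
          rw [Matrix.trace_mul_comm (Vᵀ) (M * (V * G))]
          simp only [Matrix.mul_assoc]
      _ = (Matrix.diagonal μ * N).trace := by
          rw [hM, hdiag, hN]
          rw [show Q * Matrix.diagonal μ * Qᵀ * P = Q * (Matrix.diagonal μ * (Qᵀ * P)) by
            simp only [Matrix.mul_assoc]]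
          rw [Matrix.trace_mul_comm Q (Matrix.diagonal μ * (Qᵀ * P))]
          simp only [Matrix.mul_assoc]
  -- diagonal entries of N
  have hNdiagEq : ∀ i, N i i = ∑ j, (N i j) ^ 2 := by
    intro i
    conv_lhs => rw [← hNN]
    rw [Matrix.mul_apply]
    apply Finset.sum_congr rfl
    intro j _
    have : N j i = N i j := by
      conv_lhs => rw [← hNsym]
      rfl
    rw [this]; ring
  have hc0 : ∀ i, 0 ≤ N i i := by
    intro i; rw [hNdiagEq i]; exact Finset.sum_nonneg (fun j _ => sq_nonneg _)
  have hc1 : ∀ i, N i i ≤ 1 := by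
    intro i
    have h1 : (N i i) ^ 2 ≤ N i i := by
      conv_rhs => rw [hNdiagEq i]
      exact Finset.single_le_sum (fun j _ => sq_nonneg (N i j)) (Finset.mem_univ i)
    nlinarith [hc0 i]
  have hsumN : ∑ i, N i i = (d : ℝ) := by
    have h0 : (∑ i, N i i) = N.trace := rfl
    rw [h0, hN]
    rw [show Qᵀ * P * Q = Qᵀ * (P * Q) by rw [Matrix.mul_assoc]]
    rw [Matrix.trace_mul_comm (Qᵀ) (P * Q), Matrix.mul_assoc, hQQ, Matrix.mul_one, hP]
    rw [Matrix.trace_mul_comm (V * G) (Vᵀ), ← Matrix.mul_assoc, hG1]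
    simp [Matrix.trace_one]
  have htrdiag : (Matrix.diagonal μ * N).trace = ∑ i, μ i * N i i := by
    simp [Matrix.trace, Matrix.diag, Matrix.diagonal_mul]
  rw [htr, htrdiag]
  exact sum_mu_c_le hd1 hd μ (fun i => N i i) hμ hc0 hc1 hsumN
end

section
/- Let C_xx, C_yy ∈ ℝ^{D×D} be symmetric matrices with C_xx positive semidefinite and C_yy positive definite. Let ǔ ∈ ℝ^D be a unit vector (‖ǔ‖₂ = 1) and set λ̌ := (ǔᵀC_xxǔ)/(ǔᵀC_yyǔ). Then ǔ maximizes the ratio uᵀC_xxu/uᵀC_yyu over all unit vectors u (i.e., (uᵀC_xxu)/(uᵀC_yyu) ≤ λ̌ for every unit u) if and only if ǔ maximizes the quadratic form uᵀ(C_xx − λ̌ C_yy)u over all unit vectors u (i.e., uᵀ(C_xx − λ̌ C_yy)u ≤ ǔᵀ(C_xx − λ̌ C_yy)ǔ for every unit u). -/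
open Matrix

/-! Dinkelbach's observation: for `g > 0`, `f v / g v ≤ λ` is equivalent to `f v - λ g v ≤ 0`,
and with `λ` the ratio at `x` the right-hand side `0` is exactly the value of `f - λ g` at `x`.
So `x` maximizes the ratio iff it maximizes the difference. -/

theorem isMaxOn_div_iff_isMaxOn_sub_mul {α : Type*} {f g : α → ℝ} {s : Set α} {x : α}
    (hg : ∀ v ∈ s, 0 < g v) (hx : x ∈ s) :
    IsMaxOn (fun v => f v / g v) s x ↔ IsMaxOn (fun v => f v - f x / g x * g v) s x := by
  have hx_zero : f x - f x / g x * g x = 0 := by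
    rw [div_mul_cancel₀ _ (hg x hx).ne', sub_self]
  simp only [isMaxOn_iff, hx_zero, sub_nonpos]
  refine forall₂_congr fun v hv => ?_
  rw [div_le_iff₀ (hg v hv)]

theorem dotProduct_sub_smul_mulVec {n R : Type*} [Fintype n] [CommRing R]
    (A B : Matrix n n R) (c : R) (v : n → R) :
    v ⬝ᵥ ((A - c • B) *ᵥ v) = v ⬝ᵥ (A *ᵥ v) - c * (v ⬝ᵥ (B *ᵥ v)) := by
  rw [sub_mulVec, smul_mulVec, dotProduct_sub, dotProduct_smul, smul_eq_mul]

theorem Matrix.PosDef.dotProduct_mulVec_pos_of_dotProduct_self_eq_one {n : Type*} [Fintype n]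
    {M : Matrix n n ℝ} (hM : M.PosDef) {v : n → ℝ} (hv : v ⬝ᵥ v = 1) : 0 < v ⬝ᵥ (M *ᵥ v) := by
  have hv0 : v ≠ 0 := by
    rintro rfl
    simp at hv
  simpa using hM.dotProduct_mulVec_pos hv0

theorem dPCA_cPCA_equivalence_general {D : ℕ}
    (Cxx Cyy : Matrix (Fin D) (Fin D) ℝ)
    (hy : Cyy.PosDef)
    (u : Fin D → ℝ) (hu : u ⬝ᵥ u = 1)
    (lam : ℝ) (hlam : lam = (u ⬝ᵥ (Cxx *ᵥ u)) / (u ⬝ᵥ (Cyy *ᵥ u))) :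
    (∀ v : Fin D → ℝ, v ⬝ᵥ v = 1 →
        (v ⬝ᵥ (Cxx *ᵥ v)) / (v ⬝ᵥ (Cyy *ᵥ v)) ≤ lam)
    ↔ (∀ v : Fin D → ℝ, v ⬝ᵥ v = 1 →
        v ⬝ᵥ ((Cxx - lam • Cyy) *ᵥ v) ≤ u ⬝ᵥ ((Cxx - lam • Cyy) *ᵥ u)) := by
  have key := isMaxOn_div_iff_isMaxOn_sub_mul (f := fun v => v ⬝ᵥ (Cxx *ᵥ v))
    (s := {v | v ⬝ᵥ v = 1}) (fun _ hv => hy.dotProduct_mulVec_pos_of_dotProduct_self_eq_one hv) hu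
  simp only [isMaxOn_iff, Set.mem_ofPred_eq, ← hlam] at key
  simpa only [dotProduct_sub_smul_mulVec] using key

/-- Theorem 2 of the paper: for symmetric `C_xx ⪰ 0` and `C_yy ≻ 0`, a unit vector
`ǔ` with `λ̌ = (ǔᵀC_xxǔ)/(ǔᵀC_yyǔ)` maximizes the Rayleigh ratio
`uᵀC_xxu / uᵀC_yyu` over unit vectors if and only if it maximizes the quadratic
form `uᵀ(C_xx − λ̌ C_yy)u` over unit vectors. -/
theorem dPCA_cPCA_equivalence {D : ℕ}
    (Cxx Cyy : Matrix (Fin D) (Fin D) ℝ)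
    (hx : Cxx.PosSemidef) (hy : Cyy.PosDef)
    (u : Fin D → ℝ) (hu : u ⬝ᵥ u = 1)
    (lam : ℝ) (hlam : lam = (u ⬝ᵥ (Cxx *ᵥ u)) / (u ⬝ᵥ (Cyy *ᵥ u))) :
    (∀ v : Fin D → ℝ, v ⬝ᵥ v = 1 →
        (v ⬝ᵥ (Cxx *ᵥ v)) / (v ⬝ᵥ (Cyy *ᵥ v)) ≤ lam)
    ↔ (∀ v : Fin D → ℝ, v ⬝ᵥ v = 1 →
        v ⬝ᵥ ((Cxx - lam • Cyy) *ᵥ v) ≤ u ⬝ᵥ ((Cxx - lam • Cyy) *ᵥ u)) :=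
  dPCA_cPCA_equivalence_general Cxx Cyy hy u hu lam hlam
end

section
/- Let D, k be natural numbers with k < D. Let U_b ∈ ℝ^{D×k} have orthonormal columns (U_bᵀU_b = I_k), and let u_s ∈ ℝ^D be a unit vector orthogonal to the columns of U_b (U_bᵀu_s = 0). Let λ_{y,1},…,λ_{y,k} > 0 and λ_{x,1},…,λ_{x,k+1} > 0. Define C_yy := U_b diag(λ_{y,1},…,λ_{y,k}) U_bᵀ + (I − U_bU_bᵀ) and C_xx := U_b diag(λ_{x,1},…,λ_{x,k}) U_bᵀ + λ_{x,k+1} u_s u_sᵀ. Assume that λ_{x,k+1} > λ_{x,i}/λ_{y,i} for every i = 1, …, k. Then for every nonzero u ∈ ℝ^D one has (uᵀC_xxu)/(uᵀC_yyu) ≤ λ_{x,k+1}, and equality holds if and only if u is a nonzero scalar multiple of u_s. -/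
open Matrix

/-- Theorem 3 of the paper (optimality of dPCA): under the generative model where
`C_yy = U_b diag(λ_y) U_bᵀ + (I − U_bU_bᵀ)` and
`C_xx = U_b diag(λ_{x,1..k}) U_bᵀ + λ_{x,k+1} u_s u_sᵀ`, with `u_s` a unit vector
orthogonal to the orthonormal columns of `U_b`, and with
`λ_{x,k+1} > λ_{x,i}/λ_{y,i}` for all `i`, the generalized Rayleigh quotient
`uᵀC_xxu / uᵀC_yyu` is at most `λ_{x,k+1}` for every nonzero `u`, with equality
iff `u` is a nonzero multiple of `u_s`. -/
theorem dPCA_optimality {D k : ℕ} (hk : k < D)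
    (Ub : Matrix (Fin D) (Fin k) ℝ) (hUb : Ubᵀ * Ub = 1)
    (us : Fin D → ℝ) (hus : us ⬝ᵥ us = 1) (horth : Ubᵀ *ᵥ us = 0)
    (ly lx : Fin k → ℝ) (lxs : ℝ)
    (hly : ∀ i, 0 < ly i) (hlx : ∀ i, 0 < lx i) (hlxs : 0 < lxs)
    (hgap : ∀ i, lx i / ly i < lxs)
    (Cyy Cxx : Matrix (Fin D) (Fin D) ℝ)
    (hCyy : Cyy = Ub * Matrix.diagonal ly * Ubᵀ + (1 - Ub * Ubᵀ))
    (hCxx : Cxx = Ub * Matrix.diagonal lx * Ubᵀ + lxs • Matrix.vecMulVec us us) :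
    ∀ u : Fin D → ℝ, u ≠ 0 →
      (u ⬝ᵥ (Cxx *ᵥ u)) / (u ⬝ᵥ (Cyy *ᵥ u)) ≤ lxs ∧
      ((u ⬝ᵥ (Cxx *ᵥ u)) / (u ⬝ᵥ (Cyy *ᵥ u)) = lxs ↔
        ∃ c : ℝ, c ≠ 0 ∧ u = c • us) := by
  intro u hu
  set v : Fin k → ℝ := Ubᵀ *ᵥ u with hv
  set s : ℝ := us ⬝ᵥ u with hs
  set w : Fin D → ℝ := u - Ub *ᵥ v - s • us with hw
  -- basic dot product facts
  have hvecMul : u ᵥ* Ub = v := by rw [hv, ← Matrix.mulVec_transpose]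
  have hUbv : ∀ z : Fin k → ℝ, u ⬝ᵥ (Ub *ᵥ z) = v ⬝ᵥ z := by
    intro z; rw [Matrix.dotProduct_mulVec, hvecMul]
  have hUbUb : ∀ z : Fin k → ℝ, (Ub *ᵥ v) ⬝ᵥ (Ub *ᵥ z) = v ⬝ᵥ z := by
    intro z
    rw [Matrix.dotProduct_mulVec, ← Matrix.mulVec_transpose, Matrix.mulVec_mulVec, hUb,
      Matrix.one_mulVec]
  have hUbus : (Ub *ᵥ v) ⬝ᵥ us = 0 := by
    rw [dotProduct_comm, Matrix.dotProduct_mulVec, ← Matrix.mulVec_transpose, horth,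
      zero_dotProduct]
  have huus : u ⬝ᵥ us = s := by rw [hs, dotProduct_comm]
  -- quadratic forms
  have hqd : ∀ d : Fin k → ℝ, u ⬝ᵥ ((Ub * Matrix.diagonal d * Ubᵀ) *ᵥ u)
      = ∑ i, d i * v i ^ 2 := by
    intro d
    rw [Matrix.mul_assoc, ← Matrix.mulVec_mulVec, hUbv, ← Matrix.mulVec_mulVec]
    simp only [dotProduct, Matrix.mulVec_diagonal]
    exact Finset.sum_congr rfl fun i _ => by ring
  have hvmv : u ⬝ᵥ ((lxs • Matrix.vecMulVec us us) *ᵥ u) = lxs * s ^ 2 := by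
    rw [Matrix.smul_mulVec, dotProduct_smul]
    have hvm : Matrix.vecMulVec us us *ᵥ u = s • us := by
      funext i
      simp only [Matrix.mulVec, Matrix.vecMulVec_apply, dotProduct, Pi.smul_apply,
        smul_eq_mul, hs, Finset.sum_mul]
      exact Finset.sum_congr rfl fun x _ => by ring
    rw [hvm, dotProduct_smul, huus]
    simp only [smul_eq_mul]; ring
  -- Bessel: w ⬝ᵥ w = u ⬝ᵥ u - v ⬝ᵥ v - s ^ 2
  have hww : w ⬝ᵥ w = u ⬝ᵥ u - v ⬝ᵥ v - s ^ 2 := by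
    rw [hw]
    simp only [sub_dotProduct, dotProduct_sub, smul_dotProduct,
      dotProduct_smul, hUbv, hUbUb, hUbus, huus, hus,
      dotProduct_comm (Ub *ᵥ v) u, dotProduct_comm us u,
      dotProduct_comm us (Ub *ᵥ v)]
    simp only [smul_eq_mul]
    ring
  -- identity quadratic form
  have hid : u ⬝ᵥ ((1 - Ub * Ubᵀ) *ᵥ u) = w ⬝ᵥ w + s ^ 2 := by
    rw [Matrix.sub_mulVec, dotProduct_sub, Matrix.one_mulVec, ← Matrix.mulVec_mulVec,
      hUbv, hww]
    ring
  have hNy : u ⬝ᵥ (Cyy *ᵥ u) = (∑ i, ly i * v i ^ 2) + (w ⬝ᵥ w + s ^ 2) := by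
    rw [hCyy, Matrix.add_mulVec, dotProduct_add, hqd, hid]
  have hNx : u ⬝ᵥ (Cxx *ᵥ u) = (∑ i, lx i * v i ^ 2) + lxs * s ^ 2 := by
    rw [hCxx, Matrix.add_mulVec, dotProduct_add, hqd, hvmv]
  -- positivity pieces
  have hws : (0:ℝ) ≤ w ⬝ᵥ w := Finset.sum_nonneg fun i _ => mul_self_nonneg (w i)
  have hgap' : ∀ i, lx i < lxs * ly i := fun i => by
    have := (div_lt_iff₀ (hly i)).mp (hgap i); linarith
  -- key difference
  have hsplit : ∑ i, (lxs * ly i - lx i) * v i ^ 2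
      = lxs * (∑ i, ly i * v i ^ 2) - ∑ i, lx i * v i ^ 2 := by
    rw [Finset.mul_sum, ← Finset.sum_sub_distrib]
    exact Finset.sum_congr rfl fun i _ => by ring
  have hdiff : lxs * (u ⬝ᵥ (Cyy *ᵥ u)) - u ⬝ᵥ (Cxx *ᵥ u)
      = (∑ i, (lxs * ly i - lx i) * v i ^ 2) + lxs * (w ⬝ᵥ w) := by
    rw [hNy, hNx, hsplit]; ring
  have hsum2 : (0:ℝ) ≤ ∑ i, (lxs * ly i - lx i) * v i ^ 2 :=
    Finset.sum_nonneg fun i _ => mul_nonneg (by linarith [hgap' i]) (sq_nonneg _)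
  have hdiffnn : 0 ≤ lxs * (u ⬝ᵥ (Cyy *ᵥ u)) - u ⬝ᵥ (Cxx *ᵥ u) := by
    rw [hdiff]; have := mul_nonneg hlxs.le hws; linarith
  -- denominator positive
  have hupos : 0 < u ⬝ᵥ u := by
    rcases (Finset.sum_nonneg fun i _ => mul_self_nonneg (u i) :
        (0:ℝ) ≤ u ⬝ᵥ u).lt_or_eq with h | h
    · exact h
    · exact absurd (dotProduct_self_eq_zero.mp h.symm) hu
  have hNypos : 0 < u ⬝ᵥ (Cyy *ᵥ u) := by
    rw [hNy]
    rcases eq_or_ne v 0 with hv0 | hv0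
    · have h1 : (∑ i, ly i * v i ^ 2) = 0 := by rw [hv0]; simp
      have h2 : v ⬝ᵥ v = 0 := by rw [hv0]; simp
      rw [h1, hww, h2]
      linarith
    · have hpos : 0 < ∑ i, ly i * v i ^ 2 := by
        obtain ⟨j, hj⟩ := Function.ne_iff.mp hv0
        exact Finset.sum_pos' (fun i _ => mul_nonneg (hly i).le (sq_nonneg _))
          ⟨j, Finset.mem_univ j, mul_pos (hly j) (sq_pos_of_ne_zero hj)⟩
      nlinarith [hws, sq_nonneg s]
  constructor
  · rw [div_le_iff₀ hNypos]; linarith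
  · rw [div_eq_iff hNypos.ne']
    constructor
    · intro heq
      have h0 : (∑ i, (lxs * ly i - lx i) * v i ^ 2) + lxs * (w ⬝ᵥ w) = 0 := by
        rw [← hdiff]; linarith
      have hw0 : w ⬝ᵥ w = 0 := by nlinarith
      have hsum0 : (∑ i, (lxs * ly i - lx i) * v i ^ 2) = 0 := by
        have := mul_nonneg hlxs.le hws; linarith
      have hv0 : v = 0 := by
        funext i
        have hzero := (Finset.sum_eq_zero_iff_of_nonneg
          (fun i _ => mul_nonneg (by linarith [hgap' i]) (sq_nonneg (v i)))).mp hsum0 i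
          (Finset.mem_univ i)
        have hcoef : 0 < lxs * ly i - lx i := by linarith [hgap' i]
        have hvi : v i ^ 2 = 0 := by
          rcases mul_eq_zero.mp hzero with h | h
          · exact absurd h hcoef.ne'
          · exact h
        simpa using pow_eq_zero_iff (two_ne_zero) |>.mp hvi
      have hweq : w = 0 := dotProduct_self_eq_zero.mp hw0
      have h1 : u - Ub *ᵥ v - s • us = 0 := by rw [← hw, hweq]
      rw [hv0, Matrix.mulVec_zero, sub_zero] at h1
      have hueq : u = s • us := sub_eq_zero.mp h1
      exact ⟨s, fun h0 => hu (by rw [hueq, h0, zero_smul]), hueq⟩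
    · rintro ⟨c, hc, hU⟩
      have hv0 : v = 0 := by rw [hv, hU, Matrix.mulVec_smul, horth, smul_zero]
      have hs0 : s = c := by
        rw [hs, hU, dotProduct_smul, hus, smul_eq_mul, mul_one]
      have huu : u ⬝ᵥ u = c ^ 2 := by
        rw [hU]
        simp only [smul_dotProduct, dotProduct_smul, hus, smul_eq_mul]
        ring
      rw [hNx, hNy, hww, hv0, hs0, huu]
      simp only [Pi.zero_apply, zero_dotProduct]
      simp
end

section
/- Let D, k be natural numbers with k < D. Let U_b ∈ ℝ^{D×k} have orthonormal columns (U_bᵀU_b = I_k), and let u_s ∈ ℝ^D be a unit vector orthogonal to the columns of U_b (U_bᵀu_s = 0). Let λ_{y,1},…,λ_{y,k} > 0 and λ_{x,1},…,λ_{x,k+1} > 0. Define C_yy := U_b diag(λ_{y,1},…,λ_{y,k}) U_bᵀ + (I − U_bU_bᵀ) and C_xx := U_b diag(λ_{x,1},…,λ_{x,k}) U_bᵀ + λ_{x,k+1} u_s u_sᵀ. Then C_yy is invertible and C_yy^{-1}C_xx = U_b diag(λ_{x,1}/λ_{y,1},…,λ_{x,k}/λ_{y,k}) U_bᵀ + λ_{x,k+1}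 (I − U_bU_bᵀ) u_s u_sᵀ. -/
open Matrix

/-- Closed-form decomposition of `C_yy⁻¹ C_xx` (Section IV of the paper): under the
generative model, `C_yy` is invertible and
`C_yy⁻¹ C_xx = U_b diag(λ_{x,i}/λ_{y,i}) U_bᵀ + λ_{x,k+1} (I − U_bU_bᵀ) u_s u_sᵀ`. -/
theorem dPCA_inv_product_decomposition {D k : ℕ} (hk : k < D)
    (Ub : Matrix (Fin D) (Fin k) ℝ) (hUb : Ubᵀ * Ub = 1)
    (us : Fin D → ℝ) (hus : us ⬝ᵥ us = 1) (horth : Ubᵀ *ᵥ us = 0)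
    (ly lx : Fin k → ℝ) (lxs : ℝ)
    (hly : ∀ i, 0 < ly i) (hlx : ∀ i, 0 < lx i) (hlxs : 0 < lxs)
    (Cyy Cxx : Matrix (Fin D) (Fin D) ℝ)
    (hCyy : Cyy = Ub * Matrix.diagonal ly * Ubᵀ + (1 - Ub * Ubᵀ))
    (hCxx : Cxx = Ub * Matrix.diagonal lx * Ubᵀ + lxs • Matrix.vecMulVec us us) :
    IsUnit Cyy.det ∧
      Cyy⁻¹ * Cxx =
        Ub * Matrix.diagonal (fun i => lx i / ly i) * Ubᵀ +
          lxs • ((1 - Ub * Ubᵀ) * Matrix.vecMulVec us us) := by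
  set P : Matrix (Fin D) (Fin D) ℝ := Ub * Ubᵀ with hP
  -- the candidate inverse
  set B : Matrix (Fin D) (Fin D) ℝ :=
    Ub * Matrix.diagonal (fun i => (ly i)⁻¹) * Ubᵀ + (1 - P) with hB
  -- generic sandwich lemma
  have sandwich : ∀ d e : Fin k → ℝ,
      (Ub * Matrix.diagonal d * Ubᵀ) * (Ub * Matrix.diagonal e * Ubᵀ)
        = Ub * Matrix.diagonal (fun i => d i * e i) * Ubᵀ := by
    intro d e
    calc (Ub * Matrix.diagonal d * Ubᵀ) * (Ub * Matrix.diagonal e * Ubᵀ)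
        = Ub * Matrix.diagonal d * (Ubᵀ * Ub) * (Matrix.diagonal e * Ubᵀ) := by
          simp only [Matrix.mul_assoc]
      _ = Ub * (Matrix.diagonal d * Matrix.diagonal e) * Ubᵀ := by
          rw [hUb, Matrix.mul_one]; simp only [Matrix.mul_assoc]
      _ = Ub * Matrix.diagonal (fun i => d i * e i) * Ubᵀ := by
          rw [Matrix.diagonal_mul_diagonal]
  have sandP : ∀ d : Fin k → ℝ,
      (Ub * Matrix.diagonal d * Ubᵀ) * P = Ub * Matrix.diagonal d * Ubᵀ := by
    intro d
    rw [hP]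
    calc (Ub * Matrix.diagonal d * Ubᵀ) * (Ub * Ubᵀ)
        = Ub * Matrix.diagonal d * (Ubᵀ * Ub) * Ubᵀ := by simp only [Matrix.mul_assoc]
      _ = Ub * Matrix.diagonal d * Ubᵀ := by rw [hUb, Matrix.mul_one]
  have Psand : ∀ d : Fin k → ℝ,
      P * (Ub * Matrix.diagonal d * Ubᵀ) = Ub * Matrix.diagonal d * Ubᵀ := by
    intro d
    rw [hP]
    calc (Ub * Ubᵀ) * (Ub * Matrix.diagonal d * Ubᵀ)
        = Ub * (Ubᵀ * Ub) * (Matrix.diagonal d * Ubᵀ) := by simp only [Matrix.mul_assoc]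
      _ = Ub * Matrix.diagonal d * Ubᵀ := by rw [hUb, Matrix.mul_one, Matrix.mul_assoc]
  have hPP : P * P = P := by
    rw [hP]
    calc (Ub * Ubᵀ) * (Ub * Ubᵀ) = Ub * (Ubᵀ * Ub) * Ubᵀ := by simp only [Matrix.mul_assoc]
      _ = Ub * Ubᵀ := by rw [hUb, Matrix.mul_one]
  have hdiagone : ∀ d e : Fin k → ℝ, (∀ i, d i * e i = 1) →
      Ub * Matrix.diagonal (fun i => d i * e i) * Ubᵀ = P := by
    intro d e h
    have : (fun i => d i * e i) = fun _ => (1:ℝ) := funext h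
    rw [this, Matrix.diagonal_one, Matrix.mul_one, hP]
  -- Cyy * B = 1
  have hright : Cyy * B = 1 := by
    rw [hCyy, hB]
    have e1 : (Ub * Matrix.diagonal ly * Ubᵀ) * (Ub * Matrix.diagonal (fun i => (ly i)⁻¹) * Ubᵀ) = P := by
      rw [sandwich]
      exact hdiagone _ _ fun i => mul_inv_cancel₀ (hly i).ne'
    have e2 := sandP ly
    have e3 := Psand (fun i => (ly i)⁻¹)
    simp only [add_mul, mul_add, mul_sub, sub_mul, Matrix.mul_one, Matrix.one_mul]
    rw [e1, e2, e3, hPP]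
    abel
  have hleft : B * Cyy = 1 := by
    rw [hCyy, hB]
    have e1 : (Ub * Matrix.diagonal (fun i => (ly i)⁻¹) * Ubᵀ) * (Ub * Matrix.diagonal ly * Ubᵀ) = P := by
      rw [sandwich]
      exact hdiagone _ _ fun i => inv_mul_cancel₀ (hly i).ne'
    have e2 := sandP (fun i => (ly i)⁻¹)
    have e3 := Psand ly
    simp only [add_mul, mul_add, mul_sub, sub_mul, Matrix.mul_one, Matrix.one_mul]
    rw [e1, e2, e3, hPP]
    abel
  have hdet : IsUnit Cyy.det := Matrix.isUnit_det_of_right_inverse hright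
  have hinv : Cyy⁻¹ = B := Matrix.inv_eq_right_inv hright
  refine ⟨hdet, ?_⟩
  rw [hinv, hCxx, hB]
  -- Ubᵀ kills the us outer product
  have hUv : Ubᵀ * Matrix.vecMulVec us us = 0 := by
    ext i j
    simp only [Matrix.mul_apply, Matrix.vecMulVec_apply, Matrix.zero_apply]
    have : ∑ l, Ubᵀ i l * (us l * us j) = (∑ l, Ubᵀ i l * us l) * us j := by
      rw [Finset.sum_mul]; congr 1; ext l; ring
    rw [this]
    have := congrFun horth i
    simp only [Matrix.mulVec, dotProduct, Pi.zero_apply] at this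
    rw [this, zero_mul]
  have e1 : (Ub * Matrix.diagonal (fun i => (ly i)⁻¹) * Ubᵀ) * (Ub * Matrix.diagonal lx * Ubᵀ)
      = Ub * Matrix.diagonal (fun i => lx i / ly i) * Ubᵀ := by
    have hf : (fun i => (ly i)⁻¹ * lx i) = (fun i => lx i / ly i) :=
      funext fun i => (div_eq_inv_mul _ _).symm
    rw [sandwich, hf]
  have e2 : (Ub * Matrix.diagonal (fun i => (ly i)⁻¹) * Ubᵀ) * (lxs • Matrix.vecMulVec us us) = 0 := by
    rw [Matrix.mul_smul, Matrix.mul_assoc, hUv, Matrix.mul_zero, smul_zero]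
  have e3 : (1 - P) * (Ub * Matrix.diagonal lx * Ubᵀ) = 0 := by
    rw [sub_mul, Matrix.one_mul, Psand, sub_self]
  rw [add_mul, mul_add, mul_add, e1, e2, e3, Matrix.mul_smul]
  abel
end

section
/- Let D, k be natural numbers with k < D. Let U_b ∈ ℝ^{D×k} have orthonormal columns (U_bᵀU_b = I_k), and let u_s ∈ ℝ^D be a unit vector orthogonal to the columns of U_b (U_bᵀu_s = 0). Let λ_{y,1},…,λ_{y,k} > 0 and λ_{x,1},…,λ_{x,k+1} > 0. Define C_yy := U_b diag(λ_{y,1},…,λ_{y,k}) U_bᵀ + (I − U_bU_bᵀ) and C_xx := U_b diag(λ_{x,1},…,λ_{x,k}) U_bᵀ + λ_{x,k+1} u_s u_sᵀ. Then for every i = 1, …, k, the i-th column u_{b,i} of U_b satisfies C_yy^{-1} C_xx u_{b,i} = (λ_{x,i}/λ_{y,i}) u_{b,i}; that is, each u_{b,i} is an eigenvector of C_yy^{-1}C_xx with eigenvalue λ_{x,i}/λ_{y,i}. -/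
open Matrix

/-- Intermediate claim of Section IV of the paper: under the generative model, each
column `u_{b,i}` of `U_b` is an eigenvector of `C_yy⁻¹ C_xx` with eigenvalue
`λ_{x,i}/λ_{y,i}`. -/
theorem dPCA_background_columns_eigenvectors {D k : ℕ} (hk : k < D)
    (Ub : Matrix (Fin D) (Fin k) ℝ) (hUb : Ubᵀ * Ub = 1)
    (us : Fin D → ℝ) (hus : us ⬝ᵥ us = 1) (horth : Ubᵀ *ᵥ us = 0)
    (ly lx : Fin k → ℝ) (lxs : ℝ)
    (hly : ∀ i, 0 < ly i) (hlx : ∀ i, 0 < lx i) (hlxs : 0 < lxs)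
    (Cyy Cxx : Matrix (Fin D) (Fin D) ℝ)
    (hCyy : Cyy = Ub * Matrix.diagonal ly * Ubᵀ + (1 - Ub * Ubᵀ))
    (hCxx : Cxx = Ub * Matrix.diagonal lx * Ubᵀ + lxs • Matrix.vecMulVec us us) :
    ∀ i : Fin k, (Cyy⁻¹ * Cxx) *ᵥ (Ubᵀ i) = (lx i / ly i) • (Ubᵀ i) := by
  set A : Matrix (Fin D) (Fin D) ℝ := Ub * Matrix.diagonal ly * Ubᵀ with hA
  set B : Matrix (Fin D) (Fin D) ℝ := Ub * Matrix.diagonal (fun i => (ly i)⁻¹) * Ubᵀ with hB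
  set P : Matrix (Fin D) (Fin D) ℝ := Ub * Ubᵀ with hP
  have sandwich : ∀ M N : Matrix (Fin k) (Fin k) ℝ,
      (Ub * M * Ubᵀ) * (Ub * N * Ubᵀ) = Ub * (M * N) * Ubᵀ := by
    intro M N
    calc (Ub * M * Ubᵀ) * (Ub * N * Ubᵀ) = Ub * M * (Ubᵀ * Ub) * N * Ubᵀ := by
          simp only [Matrix.mul_assoc]
      _ = Ub * (M * N) * Ubᵀ := by rw [hUb]; simp only [Matrix.mul_one, Matrix.mul_assoc]
  have hDD : Matrix.diagonal ly * Matrix.diagonal (fun i => (ly i)⁻¹) = 1 := by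
    rw [Matrix.diagonal_mul_diagonal]
    ext a b
    by_cases h : a = b <;>
      simp [Matrix.diagonal_apply, Matrix.one_apply, h, mul_inv_cancel₀ (hly _).ne']
  have hAB : A * B = P := by rw [hA, hB, sandwich, hDD, Matrix.mul_one]
  have hAP : A * P = A := by
    rw [hA, hP]
    calc Ub * Matrix.diagonal ly * Ubᵀ * (Ub * Ubᵀ)
        = Ub * Matrix.diagonal ly * (Ubᵀ * Ub) * Ubᵀ := by simp only [Matrix.mul_assoc]
      _ = Ub * Matrix.diagonal ly * Ubᵀ := by rw [hUb, Matrix.mul_one]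
  have hPB : P * B = B := by
    rw [hB, hP]
    calc Ub * Ubᵀ * (Ub * Matrix.diagonal (fun i => (ly i)⁻¹) * Ubᵀ)
        = Ub * (Ubᵀ * Ub) * (Matrix.diagonal (fun i => (ly i)⁻¹) * Ubᵀ) := by
          simp only [Matrix.mul_assoc]
      _ = Ub * Matrix.diagonal (fun i => (ly i)⁻¹) * Ubᵀ := by
          rw [hUb, Matrix.mul_one, Matrix.mul_assoc]
  have hPP : P * P = P := by
    rw [hP]
    calc Ub * Ubᵀ * (Ub * Ubᵀ) = Ub * (Ubᵀ * Ub) * Ubᵀ := by simp only [Matrix.mul_assoc]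
      _ = Ub * Ubᵀ := by rw [hUb, Matrix.mul_one]
  have key : Cyy * (B + (1 - P)) = 1 := by
    rw [hCyy]
    have expand : (A + (1 - P)) * (B + (1 - P))
        = A * B + (A - A * P) + ((B - P * B) + (1 - P - P + P * P)) := by noncomm_ring
    rw [expand, hAB, hAP, hPB, hPP]
    abel
  have hinv : Cyy⁻¹ = B + (1 - P) := Matrix.inv_eq_right_inv key
  -- column facts
  have hcol : ∀ i : Fin k, Ubᵀ *ᵥ (Ubᵀ i) = Pi.single i 1 := by
    intro i; funext j
    have h := congrFun (congrFun hUb j) i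
    simpa [Matrix.mul_apply, Matrix.mulVec, dotProduct, Matrix.one_apply,
      Pi.single_apply] using h
  have hsingle : ∀ i : Fin k, Ub *ᵥ (Pi.single i 1) = Ubᵀ i := by
    intro i; funext d
    simp [Matrix.mulVec_single, Matrix.transpose_apply]
  intro i
  have hCxxv : Cxx *ᵥ (Ubᵀ i) = lx i • (Ubᵀ i) := by
    rw [hCxx, Matrix.add_mulVec]
    have h1 : (Ub * Matrix.diagonal lx * Ubᵀ) *ᵥ (Ubᵀ i) = lx i • (Ubᵀ i) := by
      rw [← Matrix.mulVec_mulVec, ← Matrix.mulVec_mulVec, hcol,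
        Matrix.diagonal_mulVec_single, mul_one]
      have : Pi.single i (lx i) = lx i • (Pi.single i 1 : Fin k → ℝ) := by
        funext j; simp [Pi.single_apply, mul_ite]
      rw [this, Matrix.mulVec_smul, hsingle]
    have h2 : (lxs • Matrix.vecMulVec us us) *ᵥ (Ubᵀ i) = 0 := by
      have hdot : us ⬝ᵥ (Ubᵀ i) = 0 := by
        have := congrFun horth i
        simpa [Matrix.mulVec, dotProduct, mul_comm] using this
      rw [Matrix.smul_mulVec]
      have hv : Matrix.vecMulVec us us *ᵥ (Ubᵀ i) = 0 := by
        funext d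
        have : (Matrix.vecMulVec us us *ᵥ (Ubᵀ i)) d = us d * (us ⬝ᵥ (Ubᵀ i)) := by
          simp [Matrix.vecMulVec_apply, Matrix.mulVec, dotProduct, mul_assoc,
            Finset.mul_sum]
        rw [this, hdot, mul_zero]; rfl
      rw [hv, smul_zero]
    rw [h1, h2, add_zero]
  have hCyyv : Cyy⁻¹ *ᵥ (Ubᵀ i) = (ly i)⁻¹ • (Ubᵀ i) := by
    rw [hinv, Matrix.add_mulVec]
    have h1 : B *ᵥ (Ubᵀ i) = (ly i)⁻¹ • (Ubᵀ i) := by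
      rw [hB, ← Matrix.mulVec_mulVec, ← Matrix.mulVec_mulVec, hcol,
        Matrix.diagonal_mulVec_single, mul_one]
      have : Pi.single i ((ly i)⁻¹) = (ly i)⁻¹ • (Pi.single i 1 : Fin k → ℝ) := by
        funext j; simp [Pi.single_apply, mul_ite]
      rw [this, Matrix.mulVec_smul, hsingle]
    have h2 : (1 - P) *ᵥ (Ubᵀ i) = 0 := by
      rw [Matrix.sub_mulVec, Matrix.one_mulVec, hP, ← Matrix.mulVec_mulVec, hcol, hsingle,
        sub_self]
    rw [h1, h2, add_zero]
  calc (Cyy⁻¹ * Cxx) *ᵥ (Ubᵀ i) = Cyy⁻¹ *ᵥ (Cxx *ᵥ (Ubᵀ i)) := by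
        rw [Matrix.mulVec_mulVec]
    _ = Cyy⁻¹ *ᵥ (lx i • (Ubᵀ i)) := by rw [hCxxv]
    _ = lx i • ((ly i)⁻¹ • (Ubᵀ i)) := by rw [Matrix.mulVec_smul, hCyyv]
    _ = (lx i / ly i) • (Ubᵀ i) := by rw [smul_smul, div_eq_mul_inv]
end

section
/- Let D, k be natural numbers with k < D. Let U_b ∈ ℝ^{D×k} have orthonormal columns (U_bᵀU_b = I_k), and let u_s ∈ ℝ^D be a unit vector orthogonal to the columns of U_b (U_bᵀu_s = 0). Let λ_{y,1},…,λ_{y,k} > 0 and λ_{x,1},…,λ_{x,k+1} > 0. Define C_yy := U_b diag(λ_{y,1},…,λ_{y,k}) U_bᵀ + (I − U_bU_bᵀ) and C_xx := U_b diag(λ_{x,1},…,λ_{x,k}) U_bᵀ + λ_{x,k+1} u_s u_sᵀ. Then C_yy^{-1} C_xx u_s = λ_{x,k+1} u_s; that is, u_s is an eigenvector of C_yy^{-1}C_xx with eigenvalue λ_{x,k+1}. -/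
open Matrix

/-- Key intermediate claim of Section IV of the paper: under the generative model,
the discriminative direction `u_s` is an eigenvector of `C_yy⁻¹ C_xx` with
eigenvalue `λ_{x,k+1}`. -/
theorem dPCA_discriminative_direction_eigenvector {D k : ℕ} (hk : k < D)
    (Ub : Matrix (Fin D) (Fin k) ℝ) (hUb : Ubᵀ * Ub = 1)
    (us : Fin D → ℝ) (hus : us ⬝ᵥ us = 1) (horth : Ubᵀ *ᵥ us = 0)
    (ly lx : Fin k → ℝ) (lxs : ℝ)
    (hly : ∀ i, 0 < ly i) (hlx : ∀ i, 0 < lx i) (hlxs : 0 < lxs)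
    (Cyy Cxx : Matrix (Fin D) (Fin D) ℝ)
    (hCyy : Cyy = Ub * Matrix.diagonal ly * Ubᵀ + (1 - Ub * Ubᵀ))
    (hCxx : Cxx = Ub * Matrix.diagonal lx * Ubᵀ + lxs • Matrix.vecMulVec us us) :
    (Cyy⁻¹ * Cxx) *ᵥ us = lxs • us := by
  have hvv : Matrix.vecMulVec us us *ᵥ us = us := by
    ext i
    simp [Matrix.vecMulVec, Matrix.mulVec, dotProduct, Finset.mul_sum,
      mul_assoc] at hus ⊢
    simpa [dotProduct, ← Finset.mul_sum] using congrArg (us i * ·) hus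
  have hCxxv : Cxx *ᵥ us = lxs • us := by
    rw [hCxx, Matrix.add_mulVec, Matrix.mul_assoc, ← Matrix.mulVec_mulVec,
      ← Matrix.mulVec_mulVec, horth, Matrix.mulVec_zero, Matrix.mulVec_zero,
      Matrix.smul_mulVec, hvv, zero_add]
  -- explicit inverse of Cyy
  set B : Matrix (Fin D) (Fin D) ℝ :=
    Ub * Matrix.diagonal (fun i => (ly i)⁻¹) * Ubᵀ + (1 - Ub * Ubᵀ) with hB
  have hdiag : Matrix.diagonal ly * Matrix.diagonal (fun i => (ly i)⁻¹)
      = (1 : Matrix (Fin k) (Fin k) ℝ) := by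
    rw [Matrix.diagonal_mul_diagonal]
    ext i j
    by_cases h : i = j <;>
      simp [Matrix.diagonal, Matrix.one_apply, h, mul_inv_cancel₀ (hly j).ne']
  have hmul : Cyy * B = 1 := by
    rw [hCyy, hB]
    have h1 : Ub * Matrix.diagonal ly * Ubᵀ * (Ub * Matrix.diagonal (fun i => (ly i)⁻¹) * Ubᵀ)
        = Ub * Ubᵀ := by
      calc Ub * Matrix.diagonal ly * Ubᵀ * (Ub * Matrix.diagonal (fun i => (ly i)⁻¹) * Ubᵀ)
          = Ub * Matrix.diagonal ly * (Ubᵀ * Ub) * (Matrix.diagonal (fun i => (ly i)⁻¹) * Ubᵀ) := by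
            simp only [Matrix.mul_assoc]
        _ = Ub * (Matrix.diagonal ly * Matrix.diagonal (fun i => (ly i)⁻¹)) * Ubᵀ := by
            rw [hUb]; simp only [Matrix.mul_one, Matrix.mul_assoc]
        _ = Ub * Ubᵀ := by rw [hdiag, Matrix.mul_one]
    have h2 : Ub * Matrix.diagonal ly * Ubᵀ * (Ub * Ubᵀ) = Ub * Matrix.diagonal ly * Ubᵀ := by
      calc Ub * Matrix.diagonal ly * Ubᵀ * (Ub * Ubᵀ)
          = Ub * Matrix.diagonal ly * (Ubᵀ * Ub) * Ubᵀ := by simp only [Matrix.mul_assoc]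
        _ = Ub * Matrix.diagonal ly * Ubᵀ := by rw [hUb, Matrix.mul_one]
    have h3 : Ub * Ubᵀ * (Ub * Matrix.diagonal (fun i => (ly i)⁻¹) * Ubᵀ)
        = Ub * Matrix.diagonal (fun i => (ly i)⁻¹) * Ubᵀ := by
      calc Ub * Ubᵀ * (Ub * Matrix.diagonal (fun i => (ly i)⁻¹) * Ubᵀ)
          = Ub * (Ubᵀ * Ub) * (Matrix.diagonal (fun i => (ly i)⁻¹) * Ubᵀ) := by
            simp only [Matrix.mul_assoc]
        _ = Ub * Matrix.diagonal (fun i => (ly i)⁻¹) * Ubᵀ := by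
            rw [hUb, Matrix.mul_one, Matrix.mul_assoc]
    have h4 : Ub * Ubᵀ * (Ub * Ubᵀ) = Ub * Ubᵀ := by
      calc Ub * Ubᵀ * (Ub * Ubᵀ) = Ub * (Ubᵀ * Ub) * Ubᵀ := by simp only [Matrix.mul_assoc]
        _ = Ub * Ubᵀ := by rw [hUb, Matrix.mul_one]
    simp only [Matrix.add_mul, Matrix.mul_add, Matrix.sub_mul, Matrix.mul_sub,
      Matrix.one_mul, Matrix.mul_one, h1, h2, h3, h4]
    abel
  have hinv : Cyy⁻¹ = B := Matrix.inv_eq_right_inv hmul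
  have hBv : B *ᵥ us = us := by
    rw [hB, Matrix.add_mulVec, ← Matrix.mulVec_mulVec, horth, Matrix.mulVec_zero,
      Matrix.sub_mulVec, Matrix.one_mulVec, ← Matrix.mulVec_mulVec, horth,
      Matrix.mulVec_zero, sub_zero, zero_add]
  rw [← Matrix.mulVec_mulVec, hCxxv, Matrix.mulVec_smul, hinv, hBv]
end
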